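/- arXiv:2503.09624 — 2 statements merged into one kernel-verified Lean document; each statement's English description precedes it below -/
import Mathlib

section
/- For all α ≥ 0, either (α < 2γ*/(3−3γ*) and 0 < γ* ≤ 3/5) or γ* > 3/5, where γ* = 3(α+1)²/(3α(α+2)+4). -/
theorem gamma_conditions_always_satisfied (α : ℝ) (hα : 0 ≤ α) :
    (α < 2 * (3 * (α + 1) ^ 2 / (3 * α * (α + 2) + 4)) /
        (3 - 3 * (3 * (α + 1) ^ 2 / (3 * α * (α + 2) + 4))) ∧
      0 < 3 * (α + 1) ^ 2 / (3 * α * (α + 2) + 4) ∧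
      3 * (α + 1) ^ 2 / (3 * α * (α + 2) + 4) ≤ 3 / 5) ∨
    3 * (α + 1) ^ 2 / (3 * α * (α + 2) + 4) > 3 / 5 := by
  right
  have hD : (0:ℝ) < 3 * α * (α + 2) + 4 := by nlinarith
  rw [gt_iff_lt, lt_div_iff₀ hD]
  nlinarith
end

section
/- Let g: ℝ → ℝ be differentiable with |g'(x)| ≤ L_θ for all x, let p(x) = ln(1+eˣ), b = g(0), and suppose |x| ≤ c. Then for h(x) = p(g(x))·x, wherever |h(x)| < 1 the derivative satisfies |h'(x)| ≤ p'(L_θ·c + b)·L_θ·c + p(L_θ·c + b), assuming b ≥ 0. -/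
theorem lipschitz_bound_transformed (g : ℝ → ℝ) (Lθ b c x : ℝ)
    (hg : Differentiable ℝ g) (hg' : ∀ y : ℝ, |deriv g y| ≤ Lθ)
    (hb : b = g 0) (hb0 : 0 ≤ b) (hx : |x| ≤ c)
    (hsat : |Real.log (1 + Real.exp (g x)) * x| < 1) :
    |deriv (fun y : ℝ => Real.log (1 + Real.exp (g y)) * y) x| ≤
      Real.exp (Lθ * c + b) / (1 + Real.exp (Lθ * c + b)) * Lθ * c +
        Real.log (1 + Real.exp (Lθ * c + b)) := by
  have hL0 : 0 ≤ Lθ := le_trans (abs_nonneg _) (hg' 0)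
  have hc0 : 0 ≤ c := le_trans (abs_nonneg _) hx
  -- g x ≤ Lθ * c + b
  have hlip : ‖g x - g 0‖ ≤ Lθ * ‖x - 0‖ := by
    apply Convex.norm_image_sub_le_of_norm_deriv_le
      (fun y _ => hg y)
      (fun y _ => by simpa using hg' y)
      convex_univ (Set.mem_univ 0) (Set.mem_univ x)
  have hgx : g x ≤ Lθ * c + b := by
    have h1 : g x - g 0 ≤ Lθ * |x| := by
      calc g x - g 0 ≤ |g x - g 0| := le_abs_self _
        _ ≤ Lθ * |x| := by simpa using hlip
    have h2 : Lθ * |x| ≤ Lθ * c := mul_le_mul_of_nonneg_left hx hL0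
    rw [hb]; linarith
  set M := Lθ * c + b with hM
  have hexp1 : (0:ℝ) < 1 + Real.exp (g x) := by positivity
  have hexpM : (0:ℝ) < 1 + Real.exp M := by positivity
  -- derivative computation
  have hgd : HasDerivAt g (deriv g x) x := (hg x).hasDerivAt
  have h2 : HasDerivAt (fun y => 1 + Real.exp (g y)) (Real.exp (g x) * deriv g x) x :=
    (hgd.exp).const_add 1
  have h3 : HasDerivAt (fun y => Real.log (1 + Real.exp (g y)))
      ((Real.exp (g x) * deriv g x) / (1 + Real.exp (g x))) x := h2.log (ne_of_gt hexp1)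
  have h4 : HasDerivAt (fun y : ℝ => Real.log (1 + Real.exp (g y)) * y)
      (((Real.exp (g x) * deriv g x) / (1 + Real.exp (g x))) * x
        + Real.log (1 + Real.exp (g x)) * 1) x := h3.mul (hasDerivAt_id x)
  rw [h4.deriv]
  have hplog : 0 ≤ Real.log (1 + Real.exp (g x)) := by
    apply Real.log_nonneg; nlinarith [Real.exp_pos (g x)]
  have hlogle : Real.log (1 + Real.exp (g x)) ≤ Real.log (1 + Real.exp M) := by
    apply Real.log_le_log hexp1
    have := Real.exp_le_exp.mpr hgx
    linarith
  have hsig : Real.exp (g x) / (1 + Real.exp (g x)) ≤ Real.exp M / (1 + Real.exp M) := by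
    rw [div_le_div_iff₀ hexp1 hexpM]
    have := Real.exp_le_exp.mpr hgx
    nlinarith [Real.exp_pos (g x), Real.exp_pos M]
  have hsig0 : 0 ≤ Real.exp (g x) / (1 + Real.exp (g x)) := by positivity
  calc |Real.exp (g x) * deriv g x / (1 + Real.exp (g x)) * x
        + Real.log (1 + Real.exp (g x)) * 1|
      ≤ |Real.exp (g x) * deriv g x / (1 + Real.exp (g x)) * x|
        + |Real.log (1 + Real.exp (g x)) * 1| := abs_add_le _ _
    _ = Real.exp (g x) / (1 + Real.exp (g x)) * |deriv g x| * |x|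
        + Real.log (1 + Real.exp (g x)) := by
        rw [abs_mul, mul_one, abs_of_nonneg hplog, abs_div, abs_mul]
        rw [abs_of_pos (Real.exp_pos (g x)), abs_of_pos hexp1]
        ring
    _ ≤ Real.exp M / (1 + Real.exp M) * Lθ * c + Real.log (1 + Real.exp M) := by
        have hd := hg' x
        have h1 : Real.exp (g x) / (1 + Real.exp (g x)) * |deriv g x| * |x|
            ≤ Real.exp M / (1 + Real.exp M) * Lθ * c := by
          apply mul_le_mul _ hx (abs_nonneg _) (by positivity)
          exact mul_le_mul hsig hd (abs_nonneg _) (by positivity)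
        linarith
end
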